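/- Let ν : ℝ³ → ℝ be measurable with ν₀(1+|v|) ≤ ν(v) ≤ ν₁(1+|v|) for constants ν₀, ν₁ > 0, and let M(v) = (2π)^{−3/2} e^{−|v|²/2}. For ε ∈ [0,1], ξ ∈ ℝ³ \ {0}, δ > 0 and λ ∈ ℂ with Re λ ≥ −ν₀ + δ, define the bounded linear operator S_{λ,ε,ξ} on L²(ℝ³) by (S_{λ,ε,ξ} f)(v) = |ξ|^{−2} (v·ξ) √M(v) · ∫_{ℝ³} (λ + ν(u) + iε u·ξ)^{−1} f(u) √M(u) du. Then there exists C > 0 depending only on ν₀, ν₁ such that: (1) ‖S_{λ,ε,ξ}‖ ≤ C δ^{−1} |ξ|^{−1}; and (2) if λ ≠ 0, ‖S_{λ,ε,ξ}‖ ≤ C (δ^{−1} + 1)(|ξ|^{−1} + 1) |λ|^{−1}. -/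

import Mathlib

/-!
`S_{λ,ε,ξ}` is the rank-one operator `f ↦ ⟨f, k⟩ G` with `k(u) = √M(u) / (λ + ν(u) + iε u·ξ)`
and `G(v) = |ξ|⁻² (v·ξ) √M(v)`, so `‖S‖ ≤ ‖k‖₂ ‖G‖₂` by Cauchy–Schwarz. Since `|v·ξ| ≤ |v||ξ|`
and `|v|² M(v)` is dominated by a Gaussian, `‖G‖₂ ≤ 4 |ξ|⁻¹`; and `‖k‖₂ ≤ sup |λ + ν + iε u·ξ|⁻¹`
because `‖√M‖₂ = 1`. The real part of the denominator is at least `δ + ν₀|u|`, which bounds its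
inverse by `δ⁻¹`, and also absorbs `|λ| ≤ |λ + ν + iε u·ξ| + ν₁(1 + |u|) + |u||ξ|`, which gives
the `|λ|⁻¹` bound.
-/

noncomputable section

open MeasureTheory

/-- The normalized global Maxwellian `M(v) = (2π)^{−3/2} e^{−|v|²/2}` on `ℝ³`. -/
def Mx (v : EuclideanSpace ℝ (Fin 3)) : ℝ :=
  (2 * Real.pi) ^ (-(3:ℝ)/2) * Real.exp (-‖v‖^2 / 2)

/-- `(S_{λ,ε,ξ} f)(v) = |ξ|^{−2}(v·ξ)√M(v) ∫ (λ + ν(u) + iε u·ξ)^{−1} f(u) √M(u) du`. -/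
def Smap (ν : EuclideanSpace ℝ (Fin 3) → ℝ) (lam : ℂ) (ε : ℝ)
    (ξ : EuclideanSpace ℝ (Fin 3)) (f : EuclideanSpace ℝ (Fin 3) → ℂ)
    (v : EuclideanSpace ℝ (Fin 3)) : ℂ :=
  ((‖ξ‖^2)⁻¹ * (inner ℝ v ξ : ℝ) * Real.sqrt (Mx v) : ℝ) *
    ∫ u : EuclideanSpace ℝ (Fin 3),
      (lam + (ν u : ℂ) + Complex.I * ((ε * (inner ℝ u ξ : ℝ) : ℝ) : ℂ))⁻¹ *
        f u * ((Real.sqrt (Mx u) : ℝ) : ℂ)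

open scoped ENNReal

section LpNorm

variable {α 𝕜 : Type*} [MeasurableSpace α] {μ : Measure α} [RCLike 𝕜]

theorem enorm_integral_mul_le_eLpNorm_mul_eLpNorm {k f : α → 𝕜}
    (hk : AEStronglyMeasurable k μ) (hf : AEStronglyMeasurable f μ) :
    ‖∫ x, k x * f x ∂μ‖ₑ ≤ eLpNorm k 2 μ * eLpNorm f 2 μ := by
  refine (enorm_integral_le_lintegral_enorm _).trans ?_
  rw [← eLpNorm_one_eq_lintegral_enorm]
  simpa using eLpNorm_le_eLpNorm_mul_eLpNorm'_of_norm (p := 2) (q := 2) (r := 1) hk hf (· * ·) 1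
    (.of_forall fun x => by simp)

theorem sq_eLpNorm_two_eq_lintegral (f : α → ℝ) :
    eLpNorm f 2 μ ^ 2 = ∫⁻ x, ENNReal.ofReal (f x ^ 2) ∂μ := by
  have h := eLpNorm_nnreal_pow_eq_lintegral (f := f) (μ := μ) (p := 2) two_ne_zero
  norm_num at h
  rw [h]
  congr 1 with x
  rw [← ofReal_norm, ← ENNReal.ofReal_pow (norm_nonneg _), Real.norm_eq_abs, sq_abs]

end LpNorm

theorem lintegral_ofReal_mul_exp_neg_mul_sq_norm {V : Type*} [NormedAddCommGroup V]
    [InnerProductSpace ℝ V] [FiniteDimensional ℝ V] [MeasurableSpace V] [BorelSpace V]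
    {b : ℝ} (hb : 0 < b) {c : ℝ} (hc : 0 ≤ c) :
    ∫⁻ v : V, ENNReal.ofReal (c * Real.exp (-b * ‖v‖ ^ 2)) =
      ENNReal.ofReal (c * (Real.pi / b) ^ (Module.finrank ℝ V / 2 : ℝ)) := by
  have hint : ∫ v : V, Real.exp (-b * ‖v‖ ^ 2) = (Real.pi / b) ^ (Module.finrank ℝ V / 2 : ℝ) :=
    GaussianFourier.integral_rexp_neg_mul_sq_norm hb
  have hi : Integrable (fun v : V => Real.exp (-b * ‖v‖ ^ 2)) :=
    Integrable.of_integral_ne_zero (by rw [hint]; positivity)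
  rw [← ofReal_integral_eq_lintegral_ofReal (hi.const_mul c)
    (.of_forall fun v => by positivity), integral_const_mul, hint]

theorem abs_inv_sq_norm_mul_inner_le {E : Type*} [NormedAddCommGroup E] [InnerProductSpace ℝ E]
    (v ξ : E) : |(‖ξ‖ ^ 2)⁻¹ * inner ℝ v ξ| ≤ ‖ξ‖⁻¹ * ‖v‖ := by
  rcases eq_or_ne ‖ξ‖ 0 with hξ | hξ
  · simp [hξ]
  calc |(‖ξ‖ ^ 2)⁻¹ * inner ℝ v ξ| ≤ (‖ξ‖ ^ 2)⁻¹ * (‖v‖ * ‖ξ‖) := by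
        rw [abs_mul, abs_of_nonneg (by positivity)]
        exact mul_le_mul_of_nonneg_left (abs_real_inner_le_norm v ξ) (by positivity)
    _ = ‖ξ‖⁻¹ * ‖v‖ := by field_simp

theorem norm_inv_le_mul_inv_norm {𝕜 : Type*} [NormedDivisionRing 𝕜] {z w : 𝕜} {B : ℝ}
    (hw : w ≠ 0) (h : ‖w‖ ≤ B * ‖z‖) : ‖z⁻¹‖ ≤ B * ‖w‖⁻¹ := by
  have hz : z ≠ 0 := by
    rintro rfl
    exact hw (norm_le_zero_iff.1 (by simpa using h))
  rw [norm_inv, ← div_eq_mul_inv, le_div_iff₀ (norm_pos_iff.2 hw),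
    inv_mul_le_iff₀ (norm_pos_iff.2 hz), mul_comm]
  exact h

local notation "E3" => EuclideanSpace ℝ (Fin 3)

section Maxwellian

theorem Mx_pos (v : E3) : 0 < Mx v := by
  unfold Mx; positivity

theorem continuous_Mx : Continuous Mx := by
  unfold Mx; fun_prop

theorem lintegral_Mx : ∫⁻ v : E3, ENNReal.ofReal (Mx v) = 1 := by
  have h := lintegral_ofReal_mul_exp_neg_mul_sq_norm (V := E3) (b := 1 / 2) (by norm_num)
    (c := (2 * Real.pi) ^ (-(3:ℝ)/2)) (by positivity)
  convert h using 3 with v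
  · unfold Mx; ring_nf
  · rw [finrank_euclideanSpace_fin, show Real.pi / (1 / 2) = 2 * Real.pi by ring,
      ← Real.rpow_add (by positivity)]
    norm_num

theorem sq_norm_mul_Mx_le (v : E3) :
    ‖v‖ ^ 2 * Mx v ≤ 4 * (2 * Real.pi) ^ (-(3:ℝ)/2) * Real.exp (-(1 / 4) * ‖v‖ ^ 2) := by
  have hdecay : ‖v‖ ^ 2 * Real.exp (-(‖v‖ ^ 2 / 4)) ≤ 4 := by
    rw [Real.exp_neg, ← div_eq_mul_inv, div_le_iff₀ (Real.exp_pos _)]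
    linarith [Real.add_one_le_exp (‖v‖ ^ 2 / 4)]
  have hsplit : Real.exp (-‖v‖ ^ 2 / 2) =
      Real.exp (-(‖v‖ ^ 2 / 4)) * Real.exp (-(1 / 4) * ‖v‖ ^ 2) := by
    rw [← Real.exp_add]; ring_nf
  calc ‖v‖ ^ 2 * Mx v
      = (2 * Real.pi) ^ (-(3:ℝ)/2) * (‖v‖ ^ 2 * Real.exp (-(‖v‖ ^ 2 / 4))) *
          Real.exp (-(1 / 4) * ‖v‖ ^ 2) := by
        rw [Mx, hsplit]; ring
    _ ≤ (2 * Real.pi) ^ (-(3:ℝ)/2) * 4 * Real.exp (-(1 / 4) * ‖v‖ ^ 2) := by gcongr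
    _ = _ := by ring

theorem lintegral_sq_norm_mul_Mx_le : ∫⁻ v : E3, ENNReal.ofReal (‖v‖ ^ 2 * Mx v) ≤ 16 := by
  have hconst : (2 * Real.pi) ^ (-(3:ℝ)/2) * (Real.pi / (1 / 4)) ^ ((3:ℝ) / 2) = 2 ^ ((3:ℝ)/2) := by
    rw [show Real.pi / (1 / 4) = 2 * (2 * Real.pi) by ring,
      Real.mul_rpow (x := 2) (y := 2 * Real.pi) (by norm_num) (by positivity),
      mul_left_comm, ← Real.rpow_add (by positivity)]
    norm_num
  calc ∫⁻ v : E3, ENNReal.ofReal (‖v‖ ^ 2 * Mx v)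
      ≤ ∫⁻ v : E3, ENNReal.ofReal
          (4 * (2 * Real.pi) ^ (-(3:ℝ)/2) * Real.exp (-(1 / 4) * ‖v‖ ^ 2)) :=
        lintegral_mono fun v => ENNReal.ofReal_le_ofReal (sq_norm_mul_Mx_le v)
    _ = ENNReal.ofReal (4 * 2 ^ ((3:ℝ)/2)) := by
        rw [lintegral_ofReal_mul_exp_neg_mul_sq_norm (by norm_num) (by positivity),
          finrank_euclideanSpace_fin, mul_assoc, Nat.cast_ofNat, hconst]
    _ ≤ ENNReal.ofReal (4 * 2 ^ (2:ℝ)) := by gcongr <;> norm_num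
    _ = 16 := by norm_num

theorem eLpNorm_sqrt_Mx : eLpNorm (fun v : E3 => Real.sqrt (Mx v)) 2 volume = 1 := by
  have h := sq_eLpNorm_two_eq_lintegral (μ := volume) (fun v : E3 => Real.sqrt (Mx v))
  simp only [Real.sq_sqrt (Mx_pos _).le, lintegral_Mx] at h
  exact (ENNReal.pow_right_strictMono two_ne_zero).injective (by rw [h, one_pow])

theorem eLpNorm_norm_mul_sqrt_Mx_le :
    eLpNorm (fun v : E3 => ‖v‖ * Real.sqrt (Mx v)) 2 volume ≤ 4 := by
  have h := sq_eLpNorm_two_eq_lintegral (μ := volume) (fun v : E3 => ‖v‖ * Real.sqrt (Mx v))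
  simp only [mul_pow, Real.sq_sqrt (Mx_pos _).le] at h
  rw [← ENNReal.pow_le_pow_left_iff two_ne_zero, h]
  exact lintegral_sq_norm_mul_Mx_le.trans (by norm_num)

end Maxwellian

/-- The multiplier of `λ − D_ε(ξ)`; `Smap` integrates against its inverse. -/
def resolventDenom (ν : E3 → ℝ) (lam : ℂ) (ε : ℝ) (ξ u : E3) : ℂ :=
  lam + (ν u : ℂ) + Complex.I * ((ε * (inner ℝ u ξ : ℝ) : ℝ) : ℂ)

theorem eLpNorm_mul_sqrt_Mx_le {g : E3 → ℂ} {b : ℝ} (hg : ∀ u, ‖g u‖ ≤ b) :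
    eLpNorm (fun u => g u * (Real.sqrt (Mx u) : ℂ)) 2 volume ≤ ENNReal.ofReal b := by
  calc eLpNorm (fun u => g u * (Real.sqrt (Mx u) : ℂ)) 2 volume
      ≤ ENNReal.ofReal b * eLpNorm (fun v : E3 => Real.sqrt (Mx v)) 2 volume := by
        refine eLpNorm_le_mul_eLpNorm_of_ae_le_mul (.of_forall fun u => ?_) 2
        rw [norm_mul, Complex.norm_real]
        exact mul_le_mul_of_nonneg_right (hg u) (norm_nonneg _)
    _ = ENNReal.ofReal b := by rw [eLpNorm_sqrt_Mx, mul_one]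

theorem norm_Smap_le (ν : E3 → ℝ) (lam : ℂ) (ε : ℝ) (ξ : E3) (f : E3 → ℂ) (v : E3) :
    ‖Smap ν lam ε ξ f v‖ ≤
      ‖∫ u, (resolventDenom ν lam ε ξ u)⁻¹ * f u * (Real.sqrt (Mx u) : ℂ)‖ * ‖ξ‖⁻¹ *
        (‖v‖ * Real.sqrt (Mx v)) := by
  set c := ∫ u, (resolventDenom ν lam ε ξ u)⁻¹ * f u * (Real.sqrt (Mx u) : ℂ)
  change ‖(((‖ξ‖ ^ 2)⁻¹ * inner ℝ v ξ * Real.sqrt (Mx v) : ℝ) : ℂ) * c‖ ≤ _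
  rw [norm_mul, Complex.norm_real, Real.norm_eq_abs, abs_mul,
    abs_of_nonneg (Real.sqrt_nonneg _)]
  have := abs_inv_sq_norm_mul_inner_le v ξ
  calc |(‖ξ‖ ^ 2)⁻¹ * inner ℝ v ξ| * Real.sqrt (Mx v) * ‖c‖
      ≤ ‖ξ‖⁻¹ * ‖v‖ * Real.sqrt (Mx v) * ‖c‖ := by gcongr
    _ = ‖c‖ * ‖ξ‖⁻¹ * (‖v‖ * Real.sqrt (Mx v)) := by ring

theorem eLpNorm_Smap_le {ν : E3 → ℝ} (hνm : Measurable ν) {lam : ℂ} {ε : ℝ} {ξ : E3}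
    {f : E3 → ℂ} (hf : AEStronglyMeasurable f volume) {b : ℝ}
    (hb : ∀ u, ‖(resolventDenom ν lam ε ξ u)⁻¹‖ ≤ b) :
    eLpNorm (Smap ν lam ε ξ f) 2 volume ≤
      ENNReal.ofReal (4 * ‖ξ‖⁻¹ * b) * eLpNorm f 2 volume := by
  set k : E3 → ℂ := fun u => (resolventDenom ν lam ε ξ u)⁻¹ * (Real.sqrt (Mx u) : ℂ)
  set c : ℂ := ∫ u, (resolventDenom ν lam ε ξ u)⁻¹ * f u * (Real.sqrt (Mx u) : ℂ)
  have hk : AEStronglyMeasurable k volume := by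
    unfold k resolventDenom
    have := continuous_Mx
    fun_prop
  have hc : ‖c‖ₑ ≤ ENNReal.ofReal b * eLpNorm f 2 volume := by
    have hck : c = ∫ u, k u * f u := integral_congr_ae (.of_forall fun u => by simp only [k]; ring)
    rw [hck]
    exact (enorm_integral_mul_le_eLpNorm_mul_eLpNorm hk hf).trans
      (by gcongr; exact eLpNorm_mul_sqrt_Mx_le hb)
  calc eLpNorm (Smap ν lam ε ξ f) 2 volume
      ≤ ENNReal.ofReal (‖c‖ * ‖ξ‖⁻¹) *
          eLpNorm (fun v : E3 => ‖v‖ * Real.sqrt (Mx v)) 2 volume :=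
        eLpNorm_le_mul_eLpNorm_of_ae_le_mul (.of_forall fun v =>
          (norm_Smap_le ν lam ε ξ f v).trans_eq (by rw [Real.norm_of_nonneg (by positivity)])) 2
    _ ≤ ENNReal.ofReal (‖c‖ * ‖ξ‖⁻¹) * 4 := by gcongr; exact eLpNorm_norm_mul_sqrt_Mx_le
    _ = ‖c‖ₑ * ENNReal.ofReal (4 * ‖ξ‖⁻¹) := by
        rw [ENNReal.ofReal_mul (norm_nonneg _), ofReal_norm,
          ENNReal.ofReal_mul (p := 4) (by norm_num), ENNReal.ofReal_ofNat]
        ring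
    _ ≤ ENNReal.ofReal b * eLpNorm f 2 volume * ENNReal.ofReal (4 * ‖ξ‖⁻¹) := by gcongr
    _ = ENNReal.ofReal (4 * ‖ξ‖⁻¹ * b) * eLpNorm f 2 volume := by
        rw [ENNReal.ofReal_mul (p := 4 * ‖ξ‖⁻¹) (by positivity)]; ring

section Resolvent

variable {ν : E3 → ℝ} {ν₀ ν₁ δ ε : ℝ} {lam : ℂ} {ξ u : E3}

theorem le_re_resolventDenom (hν : ν₀ * (1 + ‖u‖) ≤ ν u) (hlam : -ν₀ + δ ≤ lam.re) :
    δ + ν₀ * ‖u‖ ≤ (resolventDenom ν lam ε ξ u).re := by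
  simp only [resolventDenom, Complex.add_re, Complex.ofReal_re, Complex.mul_re, Complex.I_re,
    zero_mul, Complex.I_im, Complex.ofReal_im, mul_zero, sub_self, add_zero]
  linarith

theorem norm_inv_resolventDenom_le_inv (hδ : 0 < δ) (hν₀ : 0 ≤ ν₀)
    (hν : ν₀ * (1 + ‖u‖) ≤ ν u) (hlam : -ν₀ + δ ≤ lam.re) :
    ‖(resolventDenom ν lam ε ξ u)⁻¹‖ ≤ δ⁻¹ := by
  rw [norm_inv]
  refine inv_anti₀ hδ ?_
  have := le_re_resolventDenom (ε := ε) (ξ := ξ) hν hlam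
  nlinarith [Complex.re_le_norm (resolventDenom ν lam ε ξ u), norm_nonneg u]

theorem norm_le_norm_resolventDenom_add (hε : ε ∈ Set.Icc (0:ℝ) 1) (hν₀ : 0 ≤ ν₀)
    (hν : ν₀ * (1 + ‖u‖) ≤ ν u ∧ ν u ≤ ν₁ * (1 + ‖u‖)) :
    ‖lam‖ ≤ ‖resolventDenom ν lam ε ξ u‖ + (ν₁ + ‖ξ‖) * (1 + ‖u‖) := by
  set z := resolventDenom ν lam ε ξ u
  have hνu : 0 ≤ ν u := le_trans (by positivity) hν.1
  have hinner : ‖Complex.I * ((ε * inner ℝ u ξ : ℝ) : ℂ)‖ ≤ ‖u‖ * ‖ξ‖ := by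
    rw [norm_mul, Complex.norm_I, one_mul, Complex.norm_real, Real.norm_eq_abs, abs_mul,
      abs_of_nonneg hε.1]
    exact (mul_le_of_le_one_left (abs_nonneg _) hε.2).trans (abs_real_inner_le_norm u ξ)
  have hlam_eq : lam = z - (ν u : ℂ) - Complex.I * ((ε * inner ℝ u ξ : ℝ) : ℂ) := by
    simp only [z, resolventDenom]; ring
  calc ‖lam‖ ≤ ‖z‖ + ‖(ν u : ℂ)‖ + ‖Complex.I * ((ε * inner ℝ u ξ : ℝ) : ℂ)‖ := by
        rw [hlam_eq]; exact norm_sub_le_of_le (norm_sub_le _ _) le_rfl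
    _ ≤ ‖z‖ + ν₁ * (1 + ‖u‖) + ‖u‖ * ‖ξ‖ := by
        rw [Complex.norm_real, Real.norm_of_nonneg hνu]; gcongr; exact hν.2
    _ ≤ ‖z‖ + (ν₁ + ‖ξ‖) * (1 + ‖u‖) := by nlinarith [norm_nonneg ξ]

theorem norm_le_mul_norm_resolventDenom (hν₀ : 0 < ν₀) (hν₁ : 0 ≤ ν₁) (hδ : 0 < δ)
    (hε : ε ∈ Set.Icc (0:ℝ) 1) (hν : ν₀ * (1 + ‖u‖) ≤ ν u ∧ ν u ≤ ν₁ * (1 + ‖u‖))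
    (hlam : -ν₀ + δ ≤ lam.re) :
    ‖lam‖ ≤ (1 + ν₁) * (1 + ν₀⁻¹) * (δ⁻¹ + 1) * (1 + ‖ξ‖) * ‖resolventDenom ν lam ε ξ u‖ := by
  set z := resolventDenom ν lam ε ξ u
  have hz : δ + ν₀ * ‖u‖ ≤ ‖z‖ := (le_re_resolventDenom hν.1 hlam).trans (Complex.re_le_norm z)
  have hu : 1 + ‖u‖ ≤ (δ⁻¹ + ν₀⁻¹) * ‖z‖ := by
    have hone : 1 ≤ δ⁻¹ * ‖z‖ := by
      rw [le_inv_mul_iff₀ hδ]; nlinarith [norm_nonneg u]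
    have hnorm : ‖u‖ ≤ ν₀⁻¹ * ‖z‖ := by
      rw [le_inv_mul_iff₀ hν₀]; linarith
    linarith
  have : 0 ≤ ν₀⁻¹ := by positivity
  have : 0 ≤ δ⁻¹ := by positivity
  calc ‖lam‖ ≤ ‖z‖ + (ν₁ + ‖ξ‖) * ((δ⁻¹ + ν₀⁻¹) * ‖z‖) :=
        (norm_le_norm_resolventDenom_add hε hν₀.le hν).trans (by gcongr)
    _ ≤ (1 + ν₁ + ‖ξ‖) * (1 + δ⁻¹ + ν₀⁻¹) * ‖z‖ := by
        nlinarith [norm_nonneg z, norm_nonneg ξ]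
    _ ≤ ((1 + ν₁) * (1 + ‖ξ‖)) * ((1 + ν₀⁻¹) * (δ⁻¹ + 1)) * ‖z‖ := by
        gcongr <;> nlinarith [norm_nonneg ξ]
    _ = _ := by ring

end Resolvent

theorem stmt12 (ν₀ ν₁ : ℝ) (hν₀ : 0 < ν₀) (hν₁ : 0 < ν₁) :
    ∃ C > (0:ℝ),
      ∀ ν : EuclideanSpace ℝ (Fin 3) → ℝ, Measurable ν →
        (∀ v, ν₀ * (1 + ‖v‖) ≤ ν v ∧ ν v ≤ ν₁ * (1 + ‖v‖)) →
        ∀ ε ∈ Set.Icc (0:ℝ) 1, ∀ ξ : EuclideanSpace ℝ (Fin 3), ξ ≠ 0 → ∀ δ : ℝ, 0 < δ →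
        ∀ lam : ℂ, -ν₀ + δ ≤ lam.re →
        ∀ f : EuclideanSpace ℝ (Fin 3) → ℂ, MemLp f 2 volume →
          eLpNorm (Smap ν lam ε ξ f) 2 volume ≤
            ENNReal.ofReal (C * δ⁻¹ * ‖ξ‖⁻¹) * eLpNorm f 2 volume ∧
          (lam ≠ 0 →
            eLpNorm (Smap ν lam ε ξ f) 2 volume ≤
              ENNReal.ofReal (C * (δ⁻¹ + 1) * (‖ξ‖⁻¹ + 1) * ‖lam‖⁻¹) *
                eLpNorm f 2 volume) := by
  refine ⟨4 * ((1 + ν₁) * (1 + ν₀⁻¹)), by positivity, ?_⟩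
  intro ν hνm hν ε hε ξ hξ δ hδ lam hlam f hf
  have hν₀inv : 0 ≤ ν₀⁻¹ := by positivity
  constructor
  · refine (eLpNorm_Smap_le hνm hf.1 fun u =>
      norm_inv_resolventDenom_le_inv hδ hν₀.le (hν u).1 hlam).trans ?_
    gcongr ENNReal.ofReal ?_ * _
    rw [mul_right_comm]
    gcongr
    nlinarith
  · intro hlam₀
    refine (eLpNorm_Smap_le hνm hf.1 fun u => norm_inv_le_mul_inv_norm hlam₀
      (norm_le_mul_norm_resolventDenom hν₀ hν₁.le hδ hε (hν u) hlam)).trans ?_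
    gcongr ENNReal.ofReal ?_ * _
    exact le_of_eq (by field_simp)

end
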